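/- arXiv:2011.07414 — 5 statements merged into one kernel-verified Lean document; each statement's English description precedes it below -/
import Mathlib

section
/- Let n > 0 and let X = (X_1,...,X_n) be i.i.d. discrete random variables, let I be uniform on [n] and independent of (X,Y), and let Y be a discrete random variable independent of X. Then for every deterministic function f, I(X_I ; f(X,Y) | Y, I) ≤ (1/n) · I(X ; f(X,Y) | Y). -/
open Finset

/-- The probability that a random variable `X` takes value `x`, where the underlying
finite sample space has weight function `p`. -/
noncomputable def probOf {Ω α : Type*} [Fintype Ω] [DecidableEq α]
    (p : Ω → ℝ) (X : Ω → α) (x : α) : ℝ :=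
  ∑ ω : Ω, if X ω = x then p ω else 0

/-- Shannon entropy. -/
noncomputable def entropy {Ω α : Type*} [Fintype Ω] [Fintype α] [DecidableEq α]
    (p : Ω → ℝ) (X : Ω → α) : ℝ :=
  ∑ x : α, Real.negMulLog (probOf p X x)

/-- Conditional entropy `H(X | Y) = E_{y ~ Y} [H(X | Y = y)]`. -/
noncomputable def condEntropy {Ω α β : Type*} [Fintype Ω] [Fintype α] [Fintype β]
    [DecidableEq α] [DecidableEq β] (p : Ω → ℝ) (X : Ω → α) (Y : Ω → β) : ℝ :=
  ∑ y : β, probOf p Y y *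
    entropy (fun ω => (if Y ω = y then p ω else 0) / probOf p Y y) X

/-- Conditional mutual information `I(X;Y | Z) = H(X|Z) - H(X|Y,Z)`. -/
noncomputable def condMutualInfo {Ω α β γ : Type*} [Fintype Ω] [Fintype α] [Fintype β]
    [Fintype γ] [DecidableEq α] [DecidableEq β] [DecidableEq γ]
    (p : Ω → ℝ) (X : Ω → α) (Y : Ω → β) (Z : Ω → γ) : ℝ :=
  condEntropy p X Z - condEntropy p X (fun ω => (Y ω, Z ω))

/-!
Since `I` is uniform and independent of `(X, Y)`, conditioning on `I = i` averages the
coordinates: `I(X_I ; F | Y, I) = (1/n) ∑ᵢ I(X_i ; F | Y)` with `F = f(X, Y)`. Because `X` is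
independent of `Y` and has independent coordinates, `H(X | Y) = ∑ᵢ H(X_i | Y)`, while
`H(X | F, Y) ≤ ∑ᵢ H(X_i | F, Y)` holds for any variables by Gibbs' inequality, comparing the law
of `(X, Z)` with `P(Z = z) ∏ᵢ P(X_i = x_i | Z = z)`. Subtracting gives
`∑ᵢ I(X_i ; F | Y) ≤ I(X ; F | Y)`.
-/

def IndepVars {Ω α β : Type*} [Fintype Ω] [DecidableEq α] [DecidableEq β]
    (p : Ω → ℝ) (A : Ω → α) (B : Ω → β) : Prop :=
  ∀ a b, probOf p (fun ω => (A ω, B ω)) (a, b) = probOf p A a * probOf p B b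

section

variable {Ω ι α β γ δ : Type*} [Fintype Ω] [DecidableEq ι] [DecidableEq α] [DecidableEq β]
  [DecidableEq γ] [DecidableEq δ] {p : Ω → ℝ}

theorem sum_probOf_mul [Fintype α] (V : Ω → α) (g : α → ℝ) :
    ∑ a, probOf p V a * g a = ∑ ω, p ω * g (V ω) := by
  simp only [probOf, sum_mul, ite_mul, zero_mul]
  rw [sum_comm]
  simp

theorem sum_probOf [Fintype α] (V : Ω → α) : ∑ a, probOf p V a = ∑ ω, p ω := by
  simpa using sum_probOf_mul (p := p) V fun _ => 1

theorem sum_probOf_prodMk [Fintype α] (A : Ω → α) (B : Ω → β) (b : β) :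
    ∑ a, probOf p (fun ω => (A ω, B ω)) (a, b) = probOf p B b := by
  simp only [probOf, Prod.mk.injEq, ite_and]
  rw [sum_comm]
  simp

theorem probOf_comp [Fintype α] (g : α → β) (V : Ω → α) (b : β) :
    probOf p (fun ω => g (V ω)) b = ∑ a, if g a = b then probOf p V a else 0 := by
  have := sum_probOf_mul (p := p) V fun a => if g a = b then 1 else 0
  simp only [mul_ite, mul_one, mul_zero] at this
  rw [this, probOf]

theorem probOf_comp_of_injective {e : α → β} (he : Function.Injective e) (V : Ω → α) (a : α) :
    probOf p (fun ω => e (V ω)) (e a) = probOf p V a := by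
  simp [probOf, he.eq_iff]

theorem probOf_nonneg (hp : ∀ ω, 0 ≤ p ω) (V : Ω → α) (a : α) : 0 ≤ probOf p V a :=
  sum_nonneg fun ω _ => by split_ifs <;> simp [hp ω]

theorem probOf_apply_pos (hp : ∀ ω, 0 ≤ p ω) (V : Ω → α) {ω : Ω} (hω : 0 < p ω) :
    0 < probOf p V (V ω) :=
  hω.trans_le <| by
    simpa [probOf] using single_le_sum (f := fun ω' => if V ω' = V ω then p ω' else 0)
      (fun ω' _ => by split_ifs <;> simp [hp ω']) (mem_univ ω)

theorem sum_mul_congr_of_pos (hp : ∀ ω, 0 ≤ p ω) {g h : Ω → ℝ}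
    (hgh : ∀ ω, 0 < p ω → g ω = h ω) : ∑ ω, p ω * g ω = ∑ ω, p ω * h ω := by
  refine sum_congr rfl fun ω _ => ?_
  rcases (hp ω).eq_or_lt with h0 | hω
  · simp [← h0]
  · rw [hgh ω hω]

theorem probOf_restrict (X : Ω → α) (Y : Ω → β) (x : α) (y : β) :
    probOf (fun ω => (if Y ω = y then p ω else 0) / probOf p Y y) X x
      = probOf p (fun ω => (X ω, Y ω)) (x, y) / probOf p Y y := by
  simp only [probOf, sum_div]
  refine sum_congr rfl fun ω _ => ?_
  by_cases hx : X ω = x <;> by_cases hy : Y ω = y <;> simp [hx, hy]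

theorem mul_negMulLog_div (a b : ℝ) :
    b * Real.negMulLog (a / b) = -(a * Real.log (a / b)) := by
  rcases eq_or_ne b 0 with rfl | hb
  · simp
  · rw [Real.negMulLog]
    field_simp

theorem entropy_eq_neg_sum [Fintype α] (V : Ω → α) :
    entropy p V = -∑ ω, p ω * Real.log (probOf p V (V ω)) := by
  simp only [entropy, Real.negMulLog, neg_mul, sum_neg_distrib]
  rw [sum_probOf_mul]

theorem condEntropy_eq_neg_sum [Fintype α] [Fintype β] (X : Ω → α) (Y : Ω → β) :
    condEntropy p X Y = -∑ ω, p ω *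
      Real.log (probOf p (fun ω => (X ω, Y ω)) (X ω, Y ω) / probOf p Y (Y ω)) := by
  simp only [condEntropy, entropy, probOf_restrict, mul_sum, mul_negMulLog_div, sum_neg_distrib]
  rw [sum_comm, ← Fintype.sum_prod_type', sum_probOf_mul (fun ω => (X ω, Y ω))
    fun w => Real.log (probOf p (fun ω => (X ω, Y ω)) w / probOf p Y w.2)]

theorem condEntropy_eq_sub [Fintype α] [Fintype β] (hp : ∀ ω, 0 ≤ p ω) (X : Ω → α)
    (Y : Ω → β) : condEntropy p X Y = entropy p (fun ω => (X ω, Y ω)) - entropy p Y := by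
  rw [condEntropy_eq_neg_sum, entropy_eq_neg_sum, entropy_eq_neg_sum,
    sum_mul_congr_of_pos hp fun ω hω => Real.log_div
      (probOf_apply_pos hp (fun ω => (X ω, Y ω)) hω).ne' (probOf_apply_pos hp Y hω).ne']
  simp only [mul_sub, sum_sub_distrib]
  ring

theorem entropy_comp_of_injective [Fintype α] [Fintype β] {e : α → β}
    (he : Function.Injective e) (V : Ω → α) : entropy p (fun ω => e (V ω)) = entropy p V := by
  simp only [entropy_eq_neg_sum, probOf_comp_of_injective he]

theorem condEntropy_comp_of_injective [Fintype α] [Fintype β] [Fintype γ]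
    (hp : ∀ ω, 0 ≤ p ω) {e : β → γ} (he : Function.Injective e) (X : Ω → α) (Y : Ω → β) :
    condEntropy p X (fun ω => e (Y ω)) = condEntropy p X Y := by
  rw [condEntropy_eq_sub hp, condEntropy_eq_sub hp, entropy_comp_of_injective he,
    ← entropy_comp_of_injective (Function.injective_id.prodMap he) fun ω => (X ω, Y ω)]
  rfl

theorem entropy_le_neg_sum_log [Fintype α] (hp : ∀ ω, 0 ≤ p ω) (V : Ω → α) {b : α → ℝ}
    (hb : ∀ a, 0 ≤ b a) (hb_sum : ∑ a, b a ≤ ∑ ω, p ω)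
    (hb_pos : ∀ ω, 0 < p ω → 0 < b (V ω)) :
    entropy p V ≤ -∑ ω, p ω * Real.log (b (V ω)) := by
  have hlog : ∀ ω, p ω * (Real.log (b (V ω)) - Real.log (probOf p V (V ω)))
      ≤ p ω * (b (V ω) / probOf p V (V ω) - 1) := by
    intro ω
    rcases (hp ω).eq_or_lt with h0 | hω
    · simp [← h0]
    have hP := probOf_apply_pos hp V hω
    rw [← Real.log_div (hb_pos ω hω).ne' hP.ne']
    exact mul_le_mul_of_nonneg_left
      (Real.log_le_sub_one_of_pos (div_pos (hb_pos ω hω) hP)) (hp ω)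
  have hratio : ∑ a, probOf p V a * (b a / probOf p V a) ≤ ∑ a, b a := by
    refine sum_le_sum fun a _ => ?_
    rcases eq_or_ne (probOf p V a) 0 with h0 | h0
    · simp [h0, hb a]
    · rw [mul_div_cancel₀ _ h0]
  have hsum := sum_le_sum fun ω (_ : ω ∈ univ) => hlog ω
  simp only [mul_sub, mul_one, sum_sub_distrib] at hsum
  rw [sum_probOf_mul] at hratio
  rw [entropy_eq_neg_sum]
  linarith

theorem sum_mul_prod_probOf_div [Fintype ι] [Fintype γ] (X : Ω → ι → γ) (Z : Ω → β) (z : β) :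
    ∑ x : ι → γ, probOf p Z z * ∏ i, probOf p (fun ω => (X ω i, Z ω)) (x i, z) / probOf p Z z
      = probOf p Z z := by
  rw [← mul_sum, ← Fintype.prod_sum fun i c => probOf p (fun ω => (X ω i, Z ω)) (c, z) /
    probOf p Z z]
  simp only [← sum_div, sum_probOf_prodMk]
  rcases eq_or_ne (probOf p Z z) 0 with h0 | h0
  · simp [h0]
  · simp [div_self h0]

theorem condEntropy_le_sum [Fintype ι] [Fintype β] [Fintype γ] (hp : ∀ ω, 0 ≤ p ω)
    (X : Ω → ι → γ) (Z : Ω → β) :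
    condEntropy p X Z ≤ ∑ i, condEntropy p (fun ω => X ω i) Z := by
  set PZ := probOf p Z
  set P : ι → γ × β → ℝ := fun i => probOf p fun ω => (X ω i, Z ω)
  set b : (ι → γ) × β → ℝ := fun w => PZ w.2 * ∏ i, P i (w.1 i, w.2) / PZ w.2
  have hb : ∀ w, 0 ≤ b w := fun w => mul_nonneg (probOf_nonneg hp Z _)
    (prod_nonneg fun i _ => div_nonneg (probOf_nonneg hp _ _) (probOf_nonneg hp Z _))
  have hb_sum : ∑ w, b w = ∑ ω, p ω := by
    rw [Fintype.sum_prod_type_right]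
    simp only [b, P, PZ, sum_mul_prod_probOf_div, sum_probOf]
  have hb_pos : ∀ ω, 0 < p ω → 0 < b (X ω, Z ω) := fun ω hω =>
    mul_pos (probOf_apply_pos hp Z hω) (prod_pos fun i _ =>
      div_pos (probOf_apply_pos hp (fun ω => (X ω i, Z ω)) hω) (probOf_apply_pos hp Z hω))
  have hlog : ∀ ω, 0 < p ω → Real.log (b (X ω, Z ω))
      = Real.log (PZ (Z ω)) + ∑ i, Real.log (P i (X ω i, Z ω) / PZ (Z ω)) := fun ω hω => by
    have hPZ := probOf_apply_pos hp Z hω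
    have hP i := div_pos (probOf_apply_pos hp (fun ω => (X ω i, Z ω)) hω) hPZ
    rw [Real.log_mul hPZ.ne' (prod_pos fun i _ => hP i).ne',
      Real.log_prod fun i _ => (hP i).ne']
  have hgibbs := entropy_le_neg_sum_log hp (fun ω => (X ω, Z ω)) hb hb_sum.le hb_pos
  rw [sum_mul_congr_of_pos hp hlog] at hgibbs
  simp only [mul_add, mul_sum, sum_add_distrib] at hgibbs
  rw [sum_comm] at hgibbs
  rw [condEntropy_eq_sub hp]
  simp only [condEntropy_eq_neg_sum, entropy_eq_neg_sum Z]
  rw [sum_neg_distrib]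
  linarith

theorem IndepVars.comp_left [Fintype α] [Fintype β] {A : Ω → α} {B : Ω → β}
    (h : IndepVars p A B) (g : α → γ) : IndepVars p (fun ω => g (A ω)) B := by
  intro c b
  change probOf p (fun ω => Prod.map g id (A ω, B ω)) (c, b) = _
  rw [probOf_comp (Prod.map g id), probOf_comp g A, sum_mul, Fintype.sum_prod_type]
  simp [Prod.mk.injEq, ite_and, h _ b]

theorem entropy_prodMk_of_indepVars [Fintype α] [Fintype β] (hp : ∀ ω, 0 ≤ p ω)
    {A : Ω → α} {B : Ω → β} (h : IndepVars p A B) :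
    entropy p (fun ω => (A ω, B ω)) = entropy p A + entropy p B := by
  rw [entropy_eq_neg_sum, entropy_eq_neg_sum, entropy_eq_neg_sum,
    sum_mul_congr_of_pos hp fun ω hω => by
      rw [h, Real.log_mul (probOf_apply_pos hp A hω).ne' (probOf_apply_pos hp B hω).ne']]
  simp only [mul_add, sum_add_distrib]
  ring

theorem condEntropy_eq_entropy_of_indepVars [Fintype α] [Fintype β] (hp : ∀ ω, 0 ≤ p ω)
    {A : Ω → α} {B : Ω → β} (h : IndepVars p A B) : condEntropy p A B = entropy p A := by
  rw [condEntropy_eq_sub hp, entropy_prodMk_of_indepVars hp h]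
  ring

theorem entropy_eq_sum_of_probOf_eq_prod [Fintype ι] [Fintype γ] (hp : ∀ ω, 0 ≤ p ω)
    {X : Ω → ι → γ} (hX : ∀ x, probOf p X x = ∏ i, probOf p (fun ω => X ω i) (x i)) :
    entropy p X = ∑ i, entropy p (fun ω => X ω i) := by
  simp only [entropy_eq_neg_sum]
  rw [sum_mul_congr_of_pos hp fun ω hω => by
    rw [hX, Real.log_prod fun i _ => (probOf_apply_pos hp (fun ω => X ω i) hω).ne']]
  simp only [mul_sum, sum_neg_distrib]
  rw [sum_comm]

theorem sum_condMutualInfo_le [Fintype ι] [Fintype β] [Fintype γ] [Fintype δ]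
    (hp : ∀ ω, 0 ≤ p ω) {X : Ω → ι → γ} {Y : Ω → β}
    (hX : ∀ x, probOf p X x = ∏ i, probOf p (fun ω => X ω i) (x i)) (hXY : IndepVars p X Y)
    (F : Ω → δ) : ∑ i, condMutualInfo p (fun ω => X ω i) F Y ≤ condMutualInfo p X F Y := by
  have hcond : ∑ i, condEntropy p (fun ω => X ω i) Y = condEntropy p X Y := by
    rw [condEntropy_eq_entropy_of_indepVars hp hXY, entropy_eq_sum_of_probOf_eq_prod hp hX]
    exact sum_congr rfl fun i _ =>
      condEntropy_eq_entropy_of_indepVars hp (hXY.comp_left fun x => x i)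
  have hsub := condEntropy_le_sum hp X fun ω => (F ω, Y ω)
  simp only [condMutualInfo, sum_sub_distrib]
  linarith

section UniformIndex

variable {n : ℕ} {I : Ω → Fin n} {W : Ω → α}

theorem probOf_prodMk_index [Fintype α] (hI : ∀ i, probOf p I i = 1 / n)
    (hIW : IndepVars p I W) (g : Fin n → α → β) (b : β) (i : Fin n) :
    probOf p (fun ω => (g (I ω) (W ω), I ω)) (b, i)
      = 1 / n * probOf p (fun ω => g i (W ω)) b := by
  change probOf p (fun ω => (fun v : Fin n × α => (g v.1 v.2, v.1)) (I ω, W ω)) (b, i) = _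
  rw [probOf_comp (fun v : Fin n × α => (g v.1 v.2, v.1)) fun ω => (I ω, W ω),
    probOf_comp (g i) W, mul_sum, Fintype.sum_prod_type,
    sum_eq_single i (fun j _ hj => by simp [hj]) (by simp)]
  simp [hIW _, hI]

-- The last term is `H(I)` when `∑ ω, p ω = 1`; it cancels from conditional entropies.
theorem entropy_prodMk_index [Fintype α] [Fintype β] (hI : ∀ i, probOf p I i = 1 / n)
    (hIW : IndepVars p I W) (g : Fin n → α → β) :
    entropy p (fun ω => (g (I ω) (W ω), I ω))
      = 1 / n * ∑ i, entropy p (fun ω => g i (W ω))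
        + n * (∑ ω, p ω) * Real.negMulLog (1 / n) := by
  simp only [entropy, Fintype.sum_prod_type, probOf_prodMk_index hI hIW, Real.negMulLog_mul]
  rw [sum_comm]
  simp only [sum_add_distrib, ← sum_mul, sum_probOf, ← mul_sum, sum_const, card_univ,
    Fintype.card_fin, nsmul_eq_mul]
  ring

theorem condEntropy_index [Fintype α] [Fintype β] [Fintype γ] (hp : ∀ ω, 0 ≤ p ω)
    (hI : ∀ i, probOf p I i = 1 / n) (hIW : IndepVars p I W)
    (a : Fin n → α → β) (c : Fin n → α → γ) :
    condEntropy p (fun ω => a (I ω) (W ω)) (fun ω => (c (I ω) (W ω), I ω))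
      = 1 / n * ∑ i, condEntropy p (fun ω => a i (W ω)) (fun ω => c i (W ω)) := by
  have hassoc : entropy p (fun ω => (a (I ω) (W ω), (c (I ω) (W ω), I ω)))
      = entropy p (fun ω => ((a (I ω) (W ω), c (I ω) (W ω)), I ω)) :=
    entropy_comp_of_injective (Equiv.prodAssoc β γ (Fin n)).injective
      fun ω => ((a (I ω) (W ω), c (I ω) (W ω)), I ω)
  rw [condEntropy_eq_sub hp, hassoc, entropy_prodMk_index hI hIW fun i w => (a i w, c i w),
    entropy_prodMk_index hI hIW c]
  simp only [condEntropy_eq_sub hp, sum_sub_distrib]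
  ring

theorem condMutualInfo_index [Fintype α] [Fintype β] [Fintype γ] [Fintype δ]
    (hp : ∀ ω, 0 ≤ p ω) (hI : ∀ i, probOf p I i = 1 / n) (hIW : IndepVars p I W)
    (a : Fin n → α → β) (b : Fin n → α → γ) (c : Fin n → α → δ) :
    condMutualInfo p (fun ω => a (I ω) (W ω)) (fun ω => b (I ω) (W ω))
        (fun ω => (c (I ω) (W ω), I ω))
      = 1 / n * ∑ i, condMutualInfo p (fun ω => a i (W ω)) (fun ω => b i (W ω))
          (fun ω => c i (W ω)) := by
  have hassoc : condEntropy p (fun ω => a (I ω) (W ω))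
        (fun ω => (b (I ω) (W ω), (c (I ω) (W ω), I ω)))
      = condEntropy p (fun ω => a (I ω) (W ω))
        (fun ω => ((b (I ω) (W ω), c (I ω) (W ω)), I ω)) :=
    condEntropy_comp_of_injective hp (Equiv.prodAssoc γ δ (Fin n)).injective _
      fun ω => ((b (I ω) (W ω), c (I ω) (W ω)), I ω)
  rw [condMutualInfo, hassoc, condEntropy_index hp hI hIW a c,
    condEntropy_index hp hI hIW a fun i w => (b i w, c i w), ← mul_sub, ← sum_sub_distrib]
  rfl

end UniformIndex

end

theorem condMutualInfo_index_le_general {Ω β γ δ : Type*} [Fintype Ω]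
    [Fintype β] [Fintype γ] [Fintype δ]
    [DecidableEq β] [DecidableEq γ] [DecidableEq δ]
    (n : ℕ)
    (p : Ω → ℝ) (hp : ∀ ω, 0 ≤ p ω)
    (X : Ω → (Fin n → γ)) (Y : Ω → β) (I : Ω → Fin n)
    -- the coordinates of `X` are independent:
    (hXindep : ∀ g : Fin n → γ, probOf p X g = ∏ i, probOf p (fun ω => X ω i) (g i))
    -- `Y` is independent of `X`:
    (hXY : ∀ (x : Fin n → γ) (y : β),
      probOf p (fun ω => (X ω, Y ω)) (x, y) = probOf p X x * probOf p Y y)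
    -- `I` is uniformly distributed on `[n]`:
    (hIunif : ∀ i : Fin n, probOf p I i = 1 / n)
    -- `I` is independent of `(X, Y)`:
    (hIindep : ∀ (i : Fin n) (x : Fin n → γ) (y : β),
      probOf p (fun ω => (I ω, X ω, Y ω)) (i, x, y)
        = probOf p I i * probOf p (fun ω => (X ω, Y ω)) (x, y))
    (f : (Fin n → γ) → β → δ) :
    condMutualInfo p (fun ω => X ω (I ω)) (fun ω => f (X ω) (Y ω)) (fun ω => (Y ω, I ω))
      ≤ (1 / n : ℝ) * condMutualInfo p X (fun ω => f (X ω) (Y ω)) Y := by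
  have hIW : IndepVars p I fun ω => (X ω, Y ω) := fun i w => hIindep i w.1 w.2
  calc condMutualInfo p (fun ω => X ω (I ω)) (fun ω => f (X ω) (Y ω)) (fun ω => (Y ω, I ω))
      = 1 / n * ∑ i, condMutualInfo p (fun ω => X ω i) (fun ω => f (X ω) (Y ω)) Y :=
        condMutualInfo_index hp hIunif hIW (fun i w => w.1 i) (fun _ w => f w.1 w.2)
          fun _ w => w.2
    _ ≤ 1 / n * condMutualInfo p X (fun ω => f (X ω) (Y ω)) Y := by
        gcongr
        exact sum_condMutualInfo_le hp hXindep hXY _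

/-- If `X = (X_1, …, X_n)` are i.i.d., `Y` is independent of `X`, and `I` is uniform on
`[n]` and independent of `(X, Y)`, then for every deterministic `f`,
`I(X_I ; f(X,Y) | Y, I) ≤ (1/n) · I(X ; f(X,Y) | Y)`. -/
theorem condMutualInfo_index_le {Ω β γ δ : Type*} [Fintype Ω]
    [Fintype β] [Fintype γ] [Fintype δ]
    [DecidableEq β] [DecidableEq γ] [DecidableEq δ]
    (n : ℕ) (hn : 0 < n)
    (p : Ω → ℝ) (hp : ∀ ω, 0 ≤ p ω) (hsum : ∑ ω : Ω, p ω = 1)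
    (X : Ω → (Fin n → γ)) (Y : Ω → β) (I : Ω → Fin n)
    -- the coordinates of `X` are independent:
    (hXindep : ∀ g : Fin n → γ, probOf p X g = ∏ i, probOf p (fun ω => X ω i) (g i))
    -- the coordinates of `X` are identically distributed:
    (hXident : ∀ i j : Fin n, ∀ c : γ,
      probOf p (fun ω => X ω i) c = probOf p (fun ω => X ω j) c)
    -- `Y` is independent of `X`:
    (hXY : ∀ (x : Fin n → γ) (y : β),
      probOf p (fun ω => (X ω, Y ω)) (x, y) = probOf p X x * probOf p Y y)
    -- `I` is uniformly distributed on `[n]`: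
    (hIunif : ∀ i : Fin n, probOf p I i = 1 / n)
    -- `I` is independent of `(X, Y)`:
    (hIindep : ∀ (i : Fin n) (x : Fin n → γ) (y : β),
      probOf p (fun ω => (I ω, X ω, Y ω)) (i, x, y)
        = probOf p I i * probOf p (fun ω => (X ω, Y ω)) (x, y))
    (f : (Fin n → γ) → β → δ) :
    condMutualInfo p (fun ω => X ω (I ω)) (fun ω => f (X ω) (Y ω)) (fun ω => (Y ω, I ω))
      ≤ (1 / n : ℝ) * condMutualInfo p X (fun ω => f (X ω) (Y ω)) Y :=
  condMutualInfo_index_le_general n p hp X Y I hXindep hXY hIunif hIindep f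
end

section
/- Let M = [m], let (k, P⃗, p⃗) be a partition parameter (P⃗ = (P_1,...,P_k) a partition of M into k sets and 0 ≤ p_i ≤ |P_i| for all i), and let S ⊆ M. Let PC be the uniform distribution over all U ⊆ M with |U ∩ P_i| = p_i for all i, and let PCally be the product distribution where each z ∈ M belongs to U independently with probability p_{j(z)}/|P_{j(z)}|, where j(z) is the index with z ∈ P_{j(z)}. Then Pr_{U ~ PC}(U ∩ S = ∅) ≤ Pr_{U ~ PCally}(U ∩ S = ∅). -/
open Finset Function

/-! Splitting `U` into its traces `U ∩ P i` identifies the admissible sets with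
`∏ i, (P i).powersetCard (p i)` and those avoiding `S` with `∏ i, (P i \ S).powersetCard (p i)`,
so the avoidance probability is `∏ i, C(|P i| - s_i, p_i) / C(|P i|, p_i)`, where
`s_i = |P i ∩ S|`, while the product over `z ∈ S` regroups as `∏ i, (1 - p_i / |P i|) ^ s_i`.
Removing one element from a set of size `a + 1 ≤ |P i|` multiplies `C(·, p_i)` by
`1 - p_i / (a + 1) ≤ 1 - p_i / |P i|`. -/

theorem cast_choose_le_one_sub_div_mul_choose_succ {a n : ℕ} (p : ℕ) (ha : a < n) :
    (a.choose p : ℝ) ≤ (1 - p / n) * (a + 1).choose p := by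
  rcases lt_or_ge (a + 1) p with hp | hp
  · simp [Nat.choose_eq_zero_of_lt hp, Nat.choose_eq_zero_of_lt (a.lt_succ_self.trans hp)]
  have hid : (a.choose p : ℝ) * (a + 1) = (a + 1).choose p * (a + 1 - p) := by
    exact_mod_cast Nat.choose_mul_succ_eq a p
  have hpn : (p : ℝ) / n ≤ p / (a + 1) := by
    gcongr
    exact_mod_cast ha
  calc (a.choose p : ℝ) = (1 - p / (a + 1)) * (a + 1).choose p := by
        field_simp
        linarith
    _ ≤ (1 - p / n) * (a + 1).choose p := by gcongr

theorem cast_choose_le_one_sub_div_pow_mul_choose {a s n p : ℕ} (hs : a + s ≤ n)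
    (hp : p ≤ n) :
    (a.choose p : ℝ) ≤ (1 - p / n) ^ s * (a + s).choose p := by
  induction s generalizing a with
  | zero => simp
  | succ s ih =>
    have hfactor : (0 : ℝ) ≤ 1 - p / n :=
      sub_nonneg.2 (div_le_one_of_le₀ (by exact_mod_cast hp) n.cast_nonneg)
    calc (a.choose p : ℝ) ≤ (1 - p / n) * (a + 1).choose p :=
          cast_choose_le_one_sub_div_mul_choose_succ p (by omega)
      _ ≤ (1 - p / n) * ((1 - p / n) ^ s * (a + 1 + s).choose p) := by
          gcongr
          exact ih (by omega)
      _ = (1 - p / n) ^ (s + 1) * (a + (s + 1)).choose p := by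
          rw [show a + 1 + s = a + (s + 1) by omega]
          ring

theorem cast_choose_card_sdiff_div_le {α : Type*} [DecidableEq α] {s : Finset α} {p : ℕ}
    (hp : p ≤ #s) (t : Finset α) :
    ((#(s \ t)).choose p : ℝ) / (#s).choose p ≤ (1 - p / #s) ^ #(s ∩ t) := by
  have hsplit := card_sdiff_add_card_inter s t
  rw [div_le_iff₀ (by exact_mod_cast Nat.choose_pos hp)]
  simpa only [hsplit] using cast_choose_le_one_sub_div_pow_mul_choose hsplit.le hp

section Partition

variable {α ι : Type*} [DecidableEq α] {P : ι → Finset α}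

theorem filter_index_eq_inter [DecidableEq ι] {j : α → ι} (hP : Pairwise (Disjoint on P))
    (hj : ∀ a, a ∈ P (j a)) (S : Finset α) (i : ι) : {a ∈ S | j a = i} = P i ∩ S := by
  ext a
  simp only [mem_filter, mem_inter]
  refine ⟨fun ⟨ha, hai⟩ => ⟨hai ▸ hj a, ha⟩, fun ⟨hai, ha⟩ => ⟨ha, ?_⟩⟩
  exact hP.eq (not_disjoint_iff.2 ⟨a, hj a, hai⟩)

variable [Fintype ι]

theorem prod_comp_eq_prod_pow_card_inter {M : Type*} [CommMonoid M] [DecidableEq ι]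
    {j : α → ι} (hP : Pairwise (Disjoint on P)) (hj : ∀ a, a ∈ P (j a)) (f : ι → M)
    (S : Finset α) : ∏ a ∈ S, f (j a) = ∏ i, f i ^ #(P i ∩ S) := by
  rw [← prod_fiberwise' S j f]
  refine prod_congr rfl fun i _ => ?_
  rw [prod_const, filter_index_eq_inter hP hj]

theorem biUnion_inter_eq_self (hcover : ∀ a, ∃ i, a ∈ P i) (U : Finset α) :
    univ.biUnion (fun i => U ∩ P i) = U := by
  ext a
  simpa using fun _ => hcover a

theorem biUnion_inter_eq_of_subset (hP : Pairwise (Disjoint on P)) {T : ι → Finset α}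
    (hT : ∀ i, T i ⊆ P i) (i : ι) : univ.biUnion T ∩ P i = T i := by
  ext a
  simp only [mem_inter, mem_biUnion, mem_univ, true_and]
  refine ⟨fun ⟨⟨i', ha⟩, hai⟩ => ?_, fun ha => ⟨⟨i, ha⟩, hT i ha⟩⟩
  obtain rfl : i' = i := hP.eq (not_disjoint_iff.2 ⟨a, hT i' ha, hai⟩)
  exact ha

theorem disjoint_iff_forall_inter_disjoint (hcover : ∀ a, ∃ i, a ∈ P i) (U S : Finset α) :
    Disjoint U S ↔ ∀ i, Disjoint (U ∩ P i) S := by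
  simpa only [mem_univ, true_implies, biUnion_inter_eq_self hcover] using
    disjoint_biUnion_left univ (fun i => U ∩ P i) S

variable [Fintype α] [DecidableEq ι]

theorem card_filter_forall_inter_mem (hP : Pairwise (Disjoint on P))
    (hcover : ∀ a, ∃ i, a ∈ P i) (F : ι → Finset (Finset α))
    (hF : ∀ i, ∀ T ∈ F i, T ⊆ P i) :
    #{U : Finset α | ∀ i, U ∩ P i ∈ F i} = ∏ i, #(F i) := by
  rw [← Fintype.card_piFinset]
  refine card_nbij' (fun U i => U ∩ P i) (fun T => univ.biUnion T) ?_ ?_ ?_ ?_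
  · intro U hU
    simpa using hU
  · intro T hT
    rw [mem_coe, Fintype.mem_piFinset] at hT
    simpa [biUnion_inter_eq_of_subset hP (fun i => hF i _ (hT i))] using hT
  · intro U _
    exact biUnion_inter_eq_self hcover U
  · intro T hT
    rw [mem_coe, Fintype.mem_piFinset] at hT
    funext i
    exact biUnion_inter_eq_of_subset hP (fun i => hF i _ (hT i)) i

theorem card_filter_forall_card_inter_eq_and_disjoint (hP : Pairwise (Disjoint on P))
    (hcover : ∀ a, ∃ i, a ∈ P i) (p : ι → ℕ) (S : Finset α) :
    #{U : Finset α | (∀ i, #(U ∩ P i) = p i) ∧ Disjoint U S} =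
      ∏ i, (#(P i \ S)).choose (p i) := by
  simp_rw [← card_powersetCard]
  rw [← card_filter_forall_inter_mem hP hcover _
    (fun i T hT => (mem_powersetCard.1 hT).1.trans sdiff_subset)]
  congr 1
  ext U
  rw [mem_filter, disjoint_iff_forall_inter_disjoint hcover]
  simp [mem_powersetCard, subset_sdiff, forall_and, and_comm]

end Partition

theorem pc_avoid_le_pcally_avoid_general (m k : ℕ)
    (P : Fin k → Finset (Fin m)) (pvec : Fin k → ℕ)
    -- `(P_1, …, P_k)` is a partition of `M = [m]`:
    (hdisj : ∀ i j, i ≠ j → Disjoint (P i) (P j))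
    -- `0 ≤ p_i ≤ |P_i|`:
    (hle : ∀ i, pvec i ≤ (P i).card)
    -- `j z` is the index of the part containing `z`:
    (j : Fin m → Fin k) (hj : ∀ z, z ∈ P (j z))
    (S : Finset (Fin m)) :
    (((Finset.univ.filter
        (fun U : Finset (Fin m) => ∀ i, (U ∩ P i).card = pvec i)).filter
          (fun U => U ∩ S = ∅)).card : ℝ) /
      ((Finset.univ.filter
        (fun U : Finset (Fin m) => ∀ i, (U ∩ P i).card = pvec i)).card : ℝ)
      ≤ ∏ z ∈ S, (1 - (pvec (j z) : ℝ) / ((P (j z)).card : ℝ)) := by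
  have hcover (z : Fin m) : ∃ i, z ∈ P i := ⟨j z, hj z⟩
  have hnum : #({U ∈ {U : Finset (Fin m) | ∀ i, #(U ∩ P i) = pvec i} | U ∩ S = ∅}) =
      ∏ i, (#(P i \ S)).choose (pvec i) := by
    rw [← card_filter_forall_card_inter_eq_and_disjoint hdisj hcover pvec S, filter_filter]
    simp_rw [disjoint_iff_inter_eq_empty]
  have hden := card_filter_forall_card_inter_eq_and_disjoint hdisj hcover pvec ∅
  simp only [disjoint_empty_right, and_true, sdiff_empty] at hden
  rw [hnum, hden, Nat.cast_prod, Nat.cast_prod, ← prod_div_distrib,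
    prod_comp_eq_prod_pow_card_inter hdisj hj (fun i => 1 - (pvec i : ℝ) / #(P i))]
  exact prod_le_prod (fun i _ => by positivity) fun i _ => cast_choose_card_sdiff_div_le (hle i) S

/-- Comparison of the uniform conditional distribution `PC` with its product
approximation `PCally`: the probability of avoiding a fixed set `S` is at most the
corresponding product probability. -/
theorem pc_avoid_le_pcally_avoid (m k : ℕ)
    (P : Fin k → Finset (Fin m)) (pvec : Fin k → ℕ)
    -- `(P_1, …, P_k)` is a partition of `M = [m]`:
    (hdisj : ∀ i j, i ≠ j → Disjoint (P i) (P j))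
    (hcover : ∀ z : Fin m, ∃ i, z ∈ P i)
    -- `0 ≤ p_i ≤ |P_i|`:
    (hle : ∀ i, pvec i ≤ (P i).card)
    -- `j z` is the index of the part containing `z`:
    (j : Fin m → Fin k) (hj : ∀ z, z ∈ P (j z))
    (S : Finset (Fin m)) :
    (((Finset.univ.filter
        (fun U : Finset (Fin m) => ∀ i, (U ∩ P i).card = pvec i)).filter
          (fun U => U ∩ S = ∅)).card : ℝ) /
      ((Finset.univ.filter
        (fun U : Finset (Fin m) => ∀ i, (U ∩ P i).card = pvec i)).card : ℝ)
      ≤ ∏ z ∈ S, (1 - (pvec (j z) : ℝ) / ((P (j z)).card : ℝ)) :=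
  pc_avoid_le_pcally_avoid_general m k P pvec hdisj hle j hj S
end

section
/- For any a ≥ b ≥ p ≥ 0 with a > 0 (integers), the ratio of binomial coefficients satisfies C(b, p) / C(a, p) ≤ (1 - p/a)^{a - b}. -/
/-- For integers `a ≥ b ≥ p ≥ 0` with `a > 0`,
`C(b,p) / C(a,p) ≤ (1 - p/a)^(a-b)`. -/
theorem choose_ratio_le (a b p : ℕ) (ha : 0 < a) (hpb : p ≤ b) (hba : b ≤ a) :
    ((b.choose p : ℝ) / (a.choose p : ℝ)) ≤ (1 - (p : ℝ) / (a : ℝ)) ^ (a - b) := by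
  have hpa : p ≤ a := hpb.trans hba
  have ha0 : (0:ℝ) < a := by exact_mod_cast ha
  have hq0 : (0:ℝ) ≤ 1 - (p:ℝ) / a := by
    rw [sub_nonneg, div_le_one ha0]
    exact_mod_cast hpa
  have key : ∀ d c, c + d = a → p ≤ c →
      (c.choose p : ℝ) ≤ (1 - (p:ℝ)/a) ^ d * (a.choose p : ℝ) := by
    intro d
    induction d with
    | zero =>
      intro c hc _
      simp only [Nat.add_zero] at hc
      subst hc
      simp
    | succ d ih =>
      intro c hc hpc
      have hc1 : (c+1) + d = a := by omega
      have hca : c + 1 ≤ a := by omega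
      have hc1pos : (0:ℝ) < (c:ℝ) + 1 := by positivity
      have hid : (c.choose p : ℝ) * ((c:ℝ)+1) = ((c+1).choose p : ℝ) * (((c:ℝ)+1) - p) := by
        have h := Nat.choose_mul_succ_eq c p
        have h3 : c + 1 - p = c - p + 1 := by omega
        rw [h3] at h
        have h2 := congrArg (fun n : ℕ => (n : ℝ)) h
        push_cast [Nat.cast_sub hpc] at h2
        linarith
      have h1 : (c.choose p : ℝ) ≤ (1 - (p:ℝ)/a) * ((c+1).choose p : ℝ) := by
        have heq : (c.choose p : ℝ) = ((c+1).choose p : ℝ) * (1 - (p:ℝ)/((c:ℝ)+1)) := by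
          field_simp
          linarith [hid]
        rw [heq]
        have hmono : 1 - (p:ℝ)/((c:ℝ)+1) ≤ 1 - (p:ℝ)/a := by
          have : (p:ℝ)/a ≤ (p:ℝ)/((c:ℝ)+1) := by
            apply div_le_div_of_nonneg_left (by positivity) hc1pos
            exact_mod_cast hca
          linarith
        have hch : (0:ℝ) ≤ ((c+1).choose p : ℝ) := by positivity
        nlinarith
      calc (c.choose p : ℝ) ≤ (1 - (p:ℝ)/a) * ((c+1).choose p : ℝ) := h1
        _ ≤ (1 - (p:ℝ)/a) * ((1 - (p:ℝ)/a) ^ d * (a.choose p : ℝ)) := by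
            apply mul_le_mul_of_nonneg_left (ih (c+1) hc1 (by omega)) hq0
        _ = (1 - (p:ℝ)/a) ^ (d+1) * (a.choose p : ℝ) := by ring
  have hA : (0:ℝ) < (a.choose p : ℝ) := by
    exact_mod_cast Nat.choose_pos hpa
  rw [div_le_iff₀ hA]
  exact key (a - b) b (by omega) hpb
end

section
/- Let S be compatible with T (16 atom sizes of (S¹,S²,T¹,T²) equal cmp). If (A★¹, A★²) is special with respect to (S,T) — i.e., A★¹ is 1-special, A★² is 2-special, and |A★¹∩A★²∩atom| over the 16 atoms equals specpair = (0,0,0,0,0,0,0,0,m/16,0,0,0,0,m/16,0,0) — then (complement of A★², complement of A★¹) is special with respect to (T^{rev}, S^{rev}) where T^{rev} = (T²,T¹) and S^{rev} = (S²,S¹). -/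
open Finset

/-- `cellB S true = S`, `cellB S false = Sᶜ`. -/
def cellB {m : ℕ} (S : Finset (Fin m)) : Bool → Finset (Fin m)
  | true => S
  | false => Sᶜ

/-- The atom of the Boolean algebra generated by `S1, S2, T1, T2` corresponding to the
indicator pattern `b`. -/
def atom4 {m : ℕ} (S1 S2 T1 T2 : Finset (Fin m)) (b : Bool × Bool × Bool × Bool) :
    Finset (Fin m) :=
  cellB S1 b.1 ∩ cellB S2 b.2.1 ∩ cellB T1 b.2.2.1 ∩ cellB T2 b.2.2.2

/-- Coefficients (in units of `m/16`) of the compatibility vector `cmp`. -/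
def cmpCoeff : Bool × Bool × Bool × Bool → ℕ
  | (false, false, false, false) => 4
  | (false, false, false, true) => 1
  | (false, true, false, true) => 1
  | (false, true, true, false) => 2
  | (true, false, false, false) => 1
  | (true, false, true, false) => 1
  | (true, false, true, true) => 1
  | (true, true, false, true) => 1
  | (true, true, true, true) => 4
  | _ => 0

/-- `S` is compatible with `T`. -/
def IsCompatible (m : ℕ) (S1 S2 T1 T2 : Finset (Fin m)) : Prop :=
  ∀ b, (atom4 S1 S2 T1 T2 b).card = cmpCoeff b * (m / 16)

/-- Coefficients (in units of `m/16`) of `spec₁`. -/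
def spec1Coeff : Bool × Bool × Bool × Bool → ℕ
  | (false, false, false, false) => 2
  | (false, true, false, true) => 1
  | (true, false, false, false) => 1
  | (true, false, true, false) => 1
  | (true, true, false, true) => 1
  | (true, true, true, true) => 2
  | _ => 0

/-- Coefficients (in units of `m/16`) of `spec₂`. -/
def spec2Coeff : Bool × Bool × Bool × Bool → ℕ
  | (false, false, false, false) => 2
  | (false, true, true, false) => 2
  | (true, false, false, false) => 1
  | (true, true, false, true) => 1
  | (true, true, true, true) => 2
  | _ => 0

/-- Coefficients (in units of `m/16`) of `specpair`. -/
def specpairCoeff : Bool × Bool × Bool × Bool → ℕ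
  | (true, false, false, false) => 1
  | (true, true, false, true) => 1
  | _ => 0

/-- `A` is 1-special with respect to `((X1,X2),(Y1,Y2))`. -/
def IsSpecial1 (m : ℕ) (X1 X2 Y1 Y2 A : Finset (Fin m)) : Prop :=
  ∀ b, (A ∩ atom4 X1 X2 Y1 Y2 b).card = spec1Coeff b * (m / 16)

/-- `A` is 2-special with respect to `((X1,X2),(Y1,Y2))`. -/
def IsSpecial2 (m : ℕ) (X1 X2 Y1 Y2 A : Finset (Fin m)) : Prop :=
  ∀ b, (A ∩ atom4 X1 X2 Y1 Y2 b).card = spec2Coeff b * (m / 16)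

/-- `(A1, A2)` is special with respect to `((X1,X2),(Y1,Y2))`. -/
def IsSpecialPair (m : ℕ) (X1 X2 Y1 Y2 A1 A2 : Finset (Fin m)) : Prop :=
  IsSpecial1 m X1 X2 Y1 Y2 A1 ∧ IsSpecial2 m X1 X2 Y1 Y2 A2 ∧
  ∀ b, (A1 ∩ A2 ∩ atom4 X1 X2 Y1 Y2 b).card = specpairCoeff b * (m / 16)

lemma card_compl_inter {m : ℕ} (A X : Finset (Fin m)) :
    (Aᶜ ∩ X).card + (A ∩ X).card = X.card := by
  have h : Aᶜ ∩ X = X \ A := by ext x; simp [and_comm]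
  rw [h, inter_comm]
  exact Finset.card_sdiff_add_card_inter X A

lemma card_compl_compl_inter {m : ℕ} (A1 A2 X : Finset (Fin m)) :
    (A2ᶜ ∩ A1ᶜ ∩ X).card + (A1 ∩ X).card + (A2 ∩ X).card
      = X.card + (A1 ∩ A2 ∩ X).card := by
  have h : A2ᶜ ∩ A1ᶜ ∩ X = X \ (A1 ∪ A2) := by ext x; simp; tauto
  have h1 : (X \ (A1 ∪ A2)).card + (X ∩ (A1 ∪ A2)).card = X.card :=
    Finset.card_sdiff_add_card_inter X (A1 ∪ A2)
  have h3 := Finset.card_union_add_card_inter (X ∩ A1) (X ∩ A2)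
  have h2 : (X ∩ A1) ∪ (X ∩ A2) = X ∩ (A1 ∪ A2) := by ext x; simp; tauto
  have h4 : (X ∩ A1) ∩ (X ∩ A2) = A1 ∩ A2 ∩ X := by ext x; simp; tauto
  rw [h2, h4, inter_comm X A1, inter_comm X A2] at h3
  rw [h]
  omega

lemma atom4_rev {m : ℕ} (S1 S2 T1 T2 : Finset (Fin m)) (b1 b2 b3 b4 : Bool) :
    atom4 T2 T1 S2 S1 (b1, b2, b3, b4) = atom4 S1 S2 T1 T2 (b4, b3, b2, b1) := by
  ext x
  cases b1 <;> cases b2 <;> cases b3 <;> cases b4 <;> simp [atom4, cellB] <;> tauto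

/-- If `S` is compatible with `T` and `(A★¹, A★²)` is special with respect to `(S, T)`,
then `(complement of A★², complement of A★¹)` is special with respect to
`(T^rev, S^rev)`. -/
theorem special_pair_complement (m : ℕ) (hm : 16 ∣ m)
    (S1 S2 T1 T2 : Finset (Fin m)) (hcmp : IsCompatible m S1 S2 T1 T2)
    (A1 A2 : Finset (Fin m)) (hA : IsSpecialPair m S1 S2 T1 T2 A1 A2) :
    IsSpecialPair m T2 T1 S2 S1 A2ᶜ A1ᶜ := by
  obtain ⟨h1, h2, hp⟩ := hA
  refine ⟨?_, ?_, ?_⟩ <;> rintro ⟨b1, b2, b3, b4⟩ <;> rw [atom4_rev]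
  · have hk := card_compl_inter A2 (atom4 S1 S2 T1 T2 (b4, b3, b2, b1))
    have hc := hcmp (b4, b3, b2, b1)
    have hs := h2 (b4, b3, b2, b1)
    cases b1 <;> cases b2 <;> cases b3 <;> cases b4 <;>
      simp only [cmpCoeff, spec1Coeff, spec2Coeff] at hc hs ⊢ <;> omega
  · have hk := card_compl_inter A1 (atom4 S1 S2 T1 T2 (b4, b3, b2, b1))
    have hc := hcmp (b4, b3, b2, b1)
    have hs := h1 (b4, b3, b2, b1)
    cases b1 <;> cases b2 <;> cases b3 <;> cases b4 <;>
      simp only [cmpCoeff, spec1Coeff, spec2Coeff] at hc hs ⊢ <;> omega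
  · have hk := card_compl_compl_inter A1 A2 (atom4 S1 S2 T1 T2 (b4, b3, b2, b1))
    have hc := hcmp (b4, b3, b2, b1)
    have hs1 := h1 (b4, b3, b2, b1)
    have hs2 := h2 (b4, b3, b2, b1)
    have hps := hp (b4, b3, b2, b1)
    cases b1 <;> cases b2 <;> cases b3 <;> cases b4 <;>
      simp only [cmpCoeff, spec1Coeff, spec2Coeff, specpairCoeff] at hc hs1 hs2 hps ⊢ <;> omega
end

section
/- Let k, k₁, k₂ > 0, and fix a sequence S⃗ of k subsets of M. For j ∈ {1,2}, let μ_j be the uniform distribution over sequences S⃗_j of k_j subsets of M whose joint atom-size vector with S⃗ equals a fixed vector a⃗_j ∈ ℤ^{2^{k+k_j}}. Let a⃗ ∈ ℤ^{2^{k+k₁+k₂}} be such that under independent draws S⃗₁ ~ μ₁, S⃗₂ ~ μ₂, the event E = {atom-size vector of S⃗ ∥ S⃗₁ ∥ S⃗₂ equals a⃗} has positive probability. Then for each j and every fixed sequence Z⃗, Pr_{S⃗_j ~ μ_j}(S⃗_j = Z⃗) = Pr(S⃗_j = Z⃗ | E) under the independent joint draw. In other words, conditioning on the joint atom-size vector does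 not change the marginal distribution of either coordinate. -/
open Finset

/-- The atom-size vector of a finite sequence `V` of subsets of `[m]`:
`partVec V b = |{z : ∀ i, 1[z ∈ V i] = b i}|`. -/
def partVec {m : ℕ} {ι : Type*} [Fintype ι] (V : ι → Finset (Fin m)) (b : ι → Bool) : ℕ :=
  (Finset.univ.filter (fun z : Fin m => ∀ i, (z ∈ V i ↔ b i = true))).card

/-!
Two sequences `S⃗₁, S⃗₁'` in the support of `μ₁` have the same joint atom sizes with `S⃗`, so some
permutation of `M` fixes every `S_i` and carries `S⃗₁` to `S⃗₁'`. Acting by it on `S⃗₂` is a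
bijection between the sequences completing `S⃗₁` and `S⃗₁'` to a pair in `E`, so every point of the
support of `μ₁` lies under equally many points of `E`. Conditioning a uniform distribution on a
product on a relation with fibres of constant size leaves the marginal uniform; symmetrically
for `μ₂`.
-/

open Pointwise

section ConditionedProduct

variable {α β : Type*} (s : Finset α) (t : Finset β) (P : α → β → Prop)
  [∀ a b, Decidable (P a b)]

lemma card_filter_product_eq_sum :
    #{p ∈ s ×ˢ t | P p.1 p.2} = ∑ a ∈ s, #{b ∈ t | P a b} := by
  simp only [card_filter, sum_product]

lemma card_filter_product_eq_mul_of_fiber_const {N : ℕ} (h : ∀ a ∈ s, #{b ∈ t | P a b} = N) :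
    #{p ∈ s ×ˢ t | P p.1 p.2} = #s * N := by
  rw [card_filter_product_eq_sum, sum_const_nat h]

lemma div_card_filter_fst_eq_of_fiber_const [DecidableEq α]
    (hconst : ∀ a ∈ s, ∀ a' ∈ s, #{b ∈ t | P a b} = #{b ∈ t | P a' b})
    (hne : {p ∈ s ×ˢ t | P p.1 p.2}.Nonempty) (a₀ : α) :
    (#{a ∈ s | a = a₀} : ℝ) / #s
      = #{p ∈ {p ∈ s ×ˢ t | P p.1 p.2} | p.1 = a₀} / #{p ∈ s ×ˢ t | P p.1 p.2} := by
  obtain ⟨⟨a, b⟩, hab⟩ := hne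
  obtain ⟨⟨ha, hb⟩, hP⟩ : (a ∈ s ∧ b ∈ t) ∧ P a b := by simpa using hab
  set N := #{b ∈ t | P a b}
  have hfiber : ∀ a' ∈ s, #{b ∈ t | P a' b} = N := fun a' ha' => hconst a' ha' a ha
  have hN : (N : ℝ) ≠ 0 := Nat.cast_ne_zero.2 (card_ne_zero_of_mem (mem_filter.2 ⟨hb, hP⟩))
  have hcond : #{p ∈ {p ∈ s ×ˢ t | P p.1 p.2} | p.1 = a₀} = #{a ∈ s | a = a₀} * N := by
    rw [filter_comm, filter_product_left (· = a₀)]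
    exact card_filter_product_eq_mul_of_fiber_const _ t P fun a' ha' =>
      hfiber a' (mem_filter.1 ha').1
  rw [hcond, card_filter_product_eq_mul_of_fiber_const s t P hfiber, Nat.cast_mul, Nat.cast_mul,
    mul_div_mul_right _ _ hN]

lemma div_card_filter_snd_eq_of_fiber_const [DecidableEq β]
    (hconst : ∀ b ∈ t, ∀ b' ∈ t, #{a ∈ s | P a b} = #{a ∈ s | P a b'})
    (hne : {p ∈ s ×ˢ t | P p.1 p.2}.Nonempty) (b₀ : β) :
    (#{b ∈ t | b = b₀} : ℝ) / #t
      = #{p ∈ {p ∈ s ×ˢ t | P p.1 p.2} | p.2 = b₀} / #{p ∈ s ×ˢ t | P p.1 p.2} := by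
  have hswap : #{p ∈ s ×ˢ t | P p.1 p.2} = #{q ∈ t ×ˢ s | P q.2 q.1} :=
    card_equiv (Equiv.prodComm α β) (by simp [and_comm])
  have hswap_cond : #{p ∈ {p ∈ s ×ˢ t | P p.1 p.2} | p.2 = b₀}
      = #{q ∈ {q ∈ t ×ˢ s | P q.2 q.1} | q.1 = b₀} :=
    card_equiv (Equiv.prodComm α β) (by simp [and_comm])
  rw [hswap, hswap_cond]
  exact div_card_filter_fst_eq_of_fiber_const t s (fun b a => P a b) hconst
    (card_pos.1 (hswap ▸ card_pos.2 hne)) b₀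

end ConditionedProduct

lemma card_filter_eq_of_smul {G β : Type*} [Group G] [MulAction G β] (g : G) {s : Finset β}
    {p q : β → Prop} [DecidablePred p] [DecidablePred q] (hs : ∀ x, g • x ∈ s ↔ x ∈ s)
    (hpq : ∀ x, q (g • x) ↔ p x) :
    #{x ∈ s | p x} = #{x ∈ s | q x} :=
  card_equiv (MulAction.toPerm g) (by simp [hs, hpq])

lemma smul_sumElim {G ι κ γ : Type*} [SMul G γ] (g : G) (f : ι → γ) (h : κ → γ) :
    g • Sum.elim f h = Sum.elim (g • f) (g • h) := by
  funext i
  cases i <;> rfl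

section AtomSizes

variable {m : ℕ} {ι : Type*}

def memPattern (V : ι → Finset (Fin m)) (z : Fin m) : ι → Bool :=
  fun i => decide (z ∈ V i)

lemma memPattern_smul (π : Equiv.Perm (Fin m)) (V : ι → Finset (Fin m)) (z : Fin m) :
    memPattern (π • V) (π z) = memPattern V z := by
  funext i
  simp [memPattern, ← Equiv.Perm.smul_def, smul_mem_smul_finset_iff]

variable [Fintype ι]

lemma partVec_eq_card_filter_memPattern (V : ι → Finset (Fin m)) (b : ι → Bool) :
    partVec V b = #{z | memPattern V z = b} := by
  unfold partVec memPattern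
  congr 1
  ext z
  simp only [mem_filter, mem_univ, true_and, funext_iff]
  exact forall_congr' fun i => by cases b i <;> simp

lemma partVec_smul (π : Equiv.Perm (Fin m)) (V : ι → Finset (Fin m)) :
    partVec (π • V) = partVec V := by
  funext b
  simp only [partVec_eq_card_filter_memPattern]
  exact (card_equiv π (by simp [memPattern_smul])).symm

lemma exists_perm_smul_eq_of_partVec_eq {V V' : ι → Finset (Fin m)}
    (h : partVec V = partVec V') : ∃ π : Equiv.Perm (Fin m), π • V = V' := by
  have hfiber : ∀ b, Fintype.card {z // memPattern V z = b}
      = Fintype.card {z // memPattern V' z = b} := by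
    intro b
    simpa only [Fintype.card_subtype, partVec_eq_card_filter_memPattern] using congrFun h b
  let π := Equiv.ofFiberEquiv fun b => Fintype.equivOfCardEq (hfiber b)
  refine ⟨π, funext fun i => Finset.ext fun y => ?_⟩
  obtain ⟨z, rfl⟩ := π.surjective y
  have hz : memPattern V' (π z) i = memPattern V z i :=
    congrFun (Equiv.ofFiberEquiv_map _ z) i
  simp only [memPattern, decide_eq_decide] at hz
  simpa [← Equiv.Perm.smul_def, smul_mem_smul_finset_iff] using hz.symm

end AtomSizes

section SequencesOfSubsets

variable {m : ℕ} {ι κ : Type*} [Fintype ι] [Fintype κ]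

lemma exists_perm_smul_eq_of_partVec_sumElim_eq {S : ι → Finset (Fin m)}
    {V V' : κ → Finset (Fin m)} (h : partVec (Sum.elim S V) = partVec (Sum.elim S V')) :
    ∃ π : Equiv.Perm (Fin m), π • S = S ∧ π • V = V' := by
  obtain ⟨π, hπ⟩ := exists_perm_smul_eq_of_partVec_eq h
  rw [smul_sumElim] at hπ
  exact ⟨π, by simpa using congrArg (· ∘ Sum.inl) hπ, by simpa using congrArg (· ∘ Sum.inr) hπ⟩

lemma partVec_sumElim_smul {S : ι → Finset (Fin m)} {π : Equiv.Perm (Fin m)} (hS : π • S = S)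
    (W : κ → Finset (Fin m)) :
    partVec (Sum.elim S (π • W)) = partVec (Sum.elim S W) := by
  rw [← partVec_smul π (Sum.elim S W), smul_sumElim, hS]

variable [DecidableEq ι] {κ₁ κ₂ : Type*} [Fintype κ₁] [DecidableEq κ₁] [Fintype κ₂]
  [DecidableEq κ₂] (S : ι → Finset (Fin m)) (a : (ι ⊕ (κ₁ ⊕ κ₂) → Bool) → ℕ)

lemma card_filter_partVec_sumElim_left_eq (a₂ : (ι ⊕ κ₂ → Bool) → ℕ)
    {V V' : κ₁ → Finset (Fin m)} (h : partVec (Sum.elim S V) = partVec (Sum.elim S V')) :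
    #{W ∈ {W : κ₂ → Finset (Fin m) | partVec (Sum.elim S W) = a₂} |
        partVec (Sum.elim S (Sum.elim V W)) = a}
      = #{W ∈ {W : κ₂ → Finset (Fin m) | partVec (Sum.elim S W) = a₂} |
        partVec (Sum.elim S (Sum.elim V' W)) = a} := by
  obtain ⟨π, hS, rfl⟩ := exists_perm_smul_eq_of_partVec_sumElim_eq h
  refine card_filter_eq_of_smul π (fun W => by simp [partVec_sumElim_smul hS]) fun W => ?_
  rw [← smul_sumElim, partVec_sumElim_smul hS]

lemma card_filter_partVec_sumElim_right_eq (a₁ : (ι ⊕ κ₁ → Bool) → ℕ)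
    {W W' : κ₂ → Finset (Fin m)} (h : partVec (Sum.elim S W) = partVec (Sum.elim S W')) :
    #{V ∈ {V : κ₁ → Finset (Fin m) | partVec (Sum.elim S V) = a₁} |
        partVec (Sum.elim S (Sum.elim V W)) = a}
      = #{V ∈ {V : κ₁ → Finset (Fin m) | partVec (Sum.elim S V) = a₁} |
        partVec (Sum.elim S (Sum.elim V W')) = a} := by
  obtain ⟨π, hS, rfl⟩ := exists_perm_smul_eq_of_partVec_sumElim_eq h
  refine card_filter_eq_of_smul π (fun V => by simp [partVec_sumElim_smul hS]) fun V => ?_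
  rw [← smul_sumElim, partVec_sumElim_smul hS]

end SequencesOfSubsets

theorem marginal_eq_conditional_marginal_general (m k k1 k2 : ℕ)
    (S : Fin k → Finset (Fin m))
    (a1 : (Fin k ⊕ Fin k1 → Bool) → ℕ)
    (a2 : (Fin k ⊕ Fin k2 → Bool) → ℕ)
    (a : (Fin k ⊕ (Fin k1 ⊕ Fin k2) → Bool) → ℕ)
    (C1 : Finset (Fin k1 → Finset (Fin m)))
    (C2 : Finset (Fin k2 → Finset (Fin m)))
    -- `μ_1` is uniform over `C1`, the sequences whose joint atom-size vector with `S⃗`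
    -- is `a⃗_1`, and similarly for `μ_2`:
    (hC1 : C1 = Finset.univ.filter
      (fun W : Fin k1 → Finset (Fin m) => partVec (Sum.elim S W) = a1))
    (hC2 : C2 = Finset.univ.filter
      (fun W : Fin k2 → Finset (Fin m) => partVec (Sum.elim S W) = a2))
    (E : Finset ((Fin k1 → Finset (Fin m)) × (Fin k2 → Finset (Fin m))))
    -- `E` is the event that the atom-size vector of `S⃗ ∥ S⃗₁ ∥ S⃗₂` equals `a⃗`,
    -- under the independent draw `S⃗₁ ~ μ₁`, `S⃗₂ ~ μ₂`:
    (hE : E = (C1 ×ˢ C2).filter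
      (fun W => partVec (Sum.elim S (Sum.elim W.1 W.2)) = a))
    -- this event has positive probability:
    (hEpos : E.Nonempty) :
    (∀ Z : Fin k1 → Finset (Fin m),
      ((C1.filter (fun W => W = Z)).card : ℝ) / (C1.card : ℝ)
        = ((E.filter (fun W => W.1 = Z)).card : ℝ) / (E.card : ℝ))
    ∧ (∀ Z : Fin k2 → Finset (Fin m),
      ((C2.filter (fun W => W = Z)).card : ℝ) / (C2.card : ℝ)
        = ((E.filter (fun W => W.2 = Z)).card : ℝ) / (E.card : ℝ)) := by
  subst hC1 hC2 hE
  refine ⟨div_card_filter_fst_eq_of_fiber_const _ _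
      (fun V W => partVec (Sum.elim S (Sum.elim V W)) = a) ?_ hEpos,
    div_card_filter_snd_eq_of_fiber_const _ _
      (fun V W => partVec (Sum.elim S (Sum.elim V W)) = a) ?_ hEpos⟩
  · intro V hV V' hV'
    rw [mem_filter] at hV hV'
    exact card_filter_partVec_sumElim_left_eq S a a2 (hV.2.trans hV'.2.symm)
  · intro W hW W' hW'
    rw [mem_filter] at hW hW'
    exact card_filter_partVec_sumElim_right_eq S a a1 (hW.2.trans hW'.2.symm)

/-- Conditioning on the joint atom-size vector does not change the marginal distribution
of either coordinate: for `j ∈ {1,2}` and every `Z⃗`,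
`Pr_{S⃗_j ~ μ_j}(S⃗_j = Z⃗) = Pr(S⃗_j = Z⃗ | joint atom-size vector = a⃗)`. -/
theorem marginal_eq_conditional_marginal (m k k1 k2 : ℕ)
    (hk : 0 < k) (hk1 : 0 < k1) (hk2 : 0 < k2)
    (S : Fin k → Finset (Fin m))
    (a1 : (Fin k ⊕ Fin k1 → Bool) → ℕ)
    (a2 : (Fin k ⊕ Fin k2 → Bool) → ℕ)
    (a : (Fin k ⊕ (Fin k1 ⊕ Fin k2) → Bool) → ℕ)
    (C1 : Finset (Fin k1 → Finset (Fin m)))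
    (C2 : Finset (Fin k2 → Finset (Fin m)))
    -- `μ_1` is uniform over `C1`, the sequences whose joint atom-size vector with `S⃗`
    -- is `a⃗_1`, and similarly for `μ_2`:
    (hC1 : C1 = Finset.univ.filter
      (fun W : Fin k1 → Finset (Fin m) => partVec (Sum.elim S W) = a1))
    (hC2 : C2 = Finset.univ.filter
      (fun W : Fin k2 → Finset (Fin m) => partVec (Sum.elim S W) = a2))
    (E : Finset ((Fin k1 → Finset (Fin m)) × (Fin k2 → Finset (Fin m))))
    -- `E` is the event that the atom-size vector of `S⃗ ∥ S⃗₁ ∥ S⃗₂` equals `a⃗`,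
    -- under the independent draw `S⃗₁ ~ μ₁`, `S⃗₂ ~ μ₂`:
    (hE : E = (C1 ×ˢ C2).filter
      (fun W => partVec (Sum.elim S (Sum.elim W.1 W.2)) = a))
    -- this event has positive probability:
    (hEpos : E.Nonempty) :
    (∀ Z : Fin k1 → Finset (Fin m),
      ((C1.filter (fun W => W = Z)).card : ℝ) / (C1.card : ℝ)
        = ((E.filter (fun W => W.1 = Z)).card : ℝ) / (E.card : ℝ))
    ∧ (∀ Z : Fin k2 → Finset (Fin m),
      ((C2.filter (fun W => W = Z)).card : ℝ) / (C2.card : ℝ)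
        = ((E.filter (fun W => W.2 = Z)).card : ℝ) / (E.card : ℝ)) :=
  marginal_eq_conditional_marginal_general m k k1 k2 S a1 a2 a C1 C2 hC1 hC2 E hE hEpos
end
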